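/- Let T ⊆ ℝⁿ and let Q ⊆ T be an ω-like sequence in T with zero-point z. Then z is the unique zero-point of Q, z is the unique base point of Q, and there exists an injection h : ℕ → Q with h(0) = z such that for every i ∈ ℕ, (h(i), h(i+1)) lies in the successor relation E of Q; i.e., (ℕ, succ) embeds into (Q, E). -/
import Mathlib


variable {n : ℕ}

/-- Euclidean betweenness: `t` lies between `s` and `u`. -/
def Beta (s t u : EuclideanSpace ℝ (Fin n)) : Prop :=
  dist s u = dist s t + dist t u

/-- Strict betweenness. -/
def BetaS (s t u : EuclideanSpace ℝ (Fin n)) : Prop :=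
  Beta s t u ∧ s ≠ t ∧ t ≠ u

/-- Three points are collinear (Tarski style). -/
def Coll (s t u : EuclideanSpace ℝ (Fin n)) : Prop :=
  Beta s t u ∨ Beta s u t ∨ Beta t s u

/-- `L` is a line in `T`. -/
def IsLineIn (T L : Set (EuclideanSpace ℝ (Fin n))) : Prop :=
  L ⊆ T ∧ (∃ s ∈ L, ∃ t ∈ L, s ≠ t) ∧
    (∀ s ∈ L, ∀ t ∈ L, ∀ u ∈ L, Coll s t u) ∧
    (∀ s ∈ L, ∀ t ∈ L, s ≠ t → ∀ u ∈ T, (Beta s u t ∨ Beta s t u) → u ∈ L)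

/-- `S` is an `m`-dimensional flat of ℝⁿ. -/
def IsFlat (m : ℕ) (S : Set (EuclideanSpace ℝ (Fin n))) : Prop :=
  ∃ (h : EuclideanSpace ℝ (Fin n)) (v : Fin m → EuclideanSpace ℝ (Fin n)),
    LinearIndependent ℝ v ∧
    S = {u | ∃ r : Fin m → ℝ, u = h + ∑ i, r i • v i}

/-- Two lines in `T` intersect. -/
def LinesIntersect (L₁ L₂ : Set (EuclideanSpace ℝ (Fin n))) : Prop :=
  L₁ ≠ L₂ ∧ (L₁ ∩ L₂).Nonempty

/-- `U` is a linearly regular `m`-dimensional flat. -/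
def LinearlyRegularFlat (m : ℕ) (U : Set (EuclideanSpace ℝ (Fin n))) : Prop :=
  (∃ S, IsFlat m S ∧ U ⊆ S) ∧
  (¬ ∃ S, IsFlat (m - 1) S ∧ U ⊆ S) ∧
  -- linearly complete
  (∀ L, IsLineIn U L → ∀ L', IsLineIn (Set.univ) L' → L ⊆ L' →
      ∀ r ∈ L', ∀ ε > (0 : ℝ), ∃ s ∈ L, dist s r < ε) ∧
  -- linearly closed
  (∀ L₁ L₂, IsLineIn U L₁ → IsLineIn U L₂ →
      (∃ L₁' L₂', IsLineIn (Set.univ) L₁' ∧ IsLineIn (Set.univ) L₂' ∧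
          L₁ ⊆ L₁' ∧ L₂ ⊆ L₂' ∧ L₁' ≠ L₂' ∧ (L₁' ∩ L₂').Nonempty) →
      ∃ s ∈ U, s ∈ L₁ ∩ L₂)

/-- `T` extends linearly in `m`D. -/
def ExtendsLinearlyIn (m : ℕ) (T : Set (EuclideanSpace ℝ (Fin n))) : Prop :=
  ∃ U, LinearlyRegularFlat m U ∧
    ∃ ε > (0 : ℝ), ∃ x ∈ U ∩ T, ∀ u ∈ U, dist x u < ε → u ∈ T

/-- `Q` is a sequence in `T`: a nonempty subset of a line in `T`. -/
def IsSequenceIn (T Q : Set (EuclideanSpace ℝ (Fin n))) : Prop :=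
  Q.Nonempty ∧ ∃ L, IsLineIn T L ∧ Q ⊆ L

/-- `s` and `u` are linearly `(T ∖ Q)`-connected. -/
def LinConnected (T Q : Set (EuclideanSpace ℝ (Fin n)))
    (s u : EuclideanSpace ℝ (Fin n)) : Prop :=
  s ≠ u ∧ ∀ r ∈ T, BetaS s r u → r ∉ Q

/-- `Q` is a discretely spaced sequence in `T`. -/
def DiscretelySpaced (T Q : Set (EuclideanSpace ℝ (Fin n))) : Prop :=
  IsSequenceIn T Q ∧
    ∀ s ∈ Q, ∀ t ∈ Q, s ≠ t →
      ∃ u ∈ T, u ≠ s ∧ Beta s u t ∧ ∀ r ∈ T, BetaS s r u → r ∉ Q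

/-- `s` is a base point of `Q` in `T`. -/
def IsBasePoint (Q : Set (EuclideanSpace ℝ (Fin n)))
    (s : EuclideanSpace ℝ (Fin n)) : Prop :=
  s ∈ Q ∧ ∀ u ∈ Q, ∃ v ∈ Q, v ≠ u ∧ Beta s u v

/-- `Q` is a discretely infinite sequence in `T`. -/
def DiscretelyInfinite (T Q : Set (EuclideanSpace ℝ (Fin n))) : Prop :=
  DiscretelySpaced T Q ∧ ∃ s, IsBasePoint Q s

/-- `s` is a zero-point of `Q`. -/
def IsZeroPoint (Q : Set (EuclideanSpace ℝ (Fin n)))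
    (s : EuclideanSpace ℝ (Fin n)) : Prop :=
  s ∈ Q ∧ ¬ ∃ u ∈ Q \ {s}, ∃ v ∈ Q \ {s}, Beta u s v

/-- `Q` is an ω-like sequence in `T`. -/
def OmegaLike (T Q : Set (EuclideanSpace ℝ (Fin n))) : Prop :=
  DiscretelyInfinite T Q ∧ (∃ s, IsZeroPoint Q s) ∧
    ∀ r ∈ T, (∃ s ∈ Q \ {r}, ∃ u ∈ Q \ {r}, Beta s r u) →
      ∃ s' ∈ Q \ {r}, ∃ u' ∈ Q \ {r}, Beta s' r u' ∧
        ∀ v ∈ T, v ≠ r → BetaS s' v u' → v ∉ Q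

/-- The successor relation `E` of a sequence `Q` in `T`. -/
def SuccRel (T Q : Set (EuclideanSpace ℝ (Fin n)))
    (u v : EuclideanSpace ℝ (Fin n)) : Prop :=
  u ∈ Q ∧ v ∈ Q ∧ LinConnected T Q u v ∧ ∃ z, IsZeroPoint Q z ∧ Beta z u v


private lemma absBetween (a b c : ℝ) :
    |a - c| = |a - b| + |b - c| ↔ (a ≤ b ∧ b ≤ c) ∨ (c ≤ b ∧ b ≤ a) := by
  rcases abs_cases (a - c) with ⟨e1, h1⟩|⟨e1,h1⟩ <;>
  rcases abs_cases (a - b) with ⟨e2, h2⟩|⟨e2,h2⟩ <;>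
  rcases abs_cases (b - c) with ⟨e3, h3⟩|⟨e3,h3⟩ <;>
  rw [e1, e2, e3] <;> constructor <;>
    first
      | (rintro (⟨h4,h5⟩|⟨h4,h5⟩) <;> linarith)
      | (intro h; first
          | (left; constructor <;> linarith)
          | (right; constructor <;> linarith)
          | linarith)

private lemma betaSymm {s t u : EuclideanSpace ℝ (Fin n)} (h : Beta s t u) : Beta u t s := by
  unfold Beta at h ⊢
  rw [dist_comm u s, dist_comm u t, dist_comm t s]
  linarith

private lemma distCoord {z d : EuclideanSpace ℝ (Fin n)} (hd : ‖d‖ = 1) (a b : ℝ) :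
    dist (z + a • d) (z + b • d) = |a - b| := by
  rw [dist_eq_norm]
  have h : (z + a • d) - (z + b • d) = (a - b) • d := by
    rw [add_sub_add_left_eq_sub, ← sub_smul]
  rw [h, norm_smul, hd, mul_one, Real.norm_eq_abs]

private lemma coordInj {z d : EuclideanSpace ℝ (Fin n)} (hd : ‖d‖ = 1) {a b : ℝ}
    (h : z + a • d = z + b • d) : a = b := by
  have h2 : |a - b| = 0 := by rw [← distCoord hd, h, dist_self]
  have := abs_eq_zero.1 h2
  linarith [sub_eq_zero.1 this]

private lemma betaCoord {z d : EuclideanSpace ℝ (Fin n)} (hd : ‖d‖ = 1) (a b c : ℝ) :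
    Beta (z + a • d) (z + b • d) (z + c • d) ↔ ((a ≤ b ∧ b ≤ c) ∨ (c ≤ b ∧ b ≤ a)) := by
  unfold Beta
  rw [distCoord hd, distCoord hd, distCoord hd]
  exact absBetween a b c

private lemma segCoord {z d : EuclideanSpace ℝ (Fin n)} {a b : ℝ}
    {x : EuclideanSpace ℝ (Fin n)}
    (h : Beta (z + a • d) x (z + b • d)) :
    ∃ t, ((a ≤ t ∧ t ≤ b) ∨ (b ≤ t ∧ t ≤ a)) ∧ x = z + t • d := by
  have hx : x ∈ segment ℝ (z + a • d) (z + b • d) := by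
    rw [mem_segment_iff_wbtw, ← dist_add_dist_eq_iff]
    exact h.symm
  rw [segment_eq_image'] at hx
  obtain ⟨θ, ⟨h0, h1⟩, hx⟩ := hx
  refine ⟨a + θ * (b - a), ?_, ?_⟩
  · rcases le_total a b with hab|hab
    · left; constructor <;> nlinarith
    · right; constructor <;> nlinarith
  · have hx2 : z + a • d + θ • (z + b • d - (z + a • d)) = x := hx
    rw [← hx2]
    have h2 : (z + b • d) - (z + a • d) = (b - a) • d := by
      rw [add_sub_add_left_eq_sub, ← sub_smul]
    rw [h2, smul_smul, add_smul, ← add_assoc]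

theorem stmt_10 (T Q : Set (EuclideanSpace ℝ (Fin n)))
    (z : EuclideanSpace ℝ (Fin n))
    (hQ : OmegaLike T Q) (hz : IsZeroPoint Q z) :
    (∀ z', IsZeroPoint Q z' → z' = z) ∧
    IsBasePoint Q z ∧ (∀ s, IsBasePoint Q s → s = z) ∧
    ∃ h : ℕ → EuclideanSpace ℝ (Fin n),
      h 0 = z ∧ Function.Injective h ∧ (∀ i, h i ∈ Q) ∧
      ∀ i, SuccRel T Q (h i) (h (i + 1)) := by
  obtain ⟨⟨⟨⟨hQne, L, hL, hQL⟩, hds⟩, s₀, hs₀⟩, -, hadj⟩ := hQ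
  have hQT : Q ⊆ T := fun q hq => hL.1 (hQL hq)
  have hbp : ∀ s, IsBasePoint Q s → s = z := by
    intro s hs
    by_contra hsz
    obtain ⟨v, hvQ, hvz, hB⟩ := hs.2 z hz.1
    exact hz.2 ⟨s, ⟨hs.1, by simp [hsz]⟩, v, ⟨hvQ, by simp [hvz]⟩, hB⟩
  have hzbp : IsBasePoint Q z := hbp s₀ hs₀ ▸ hs₀
  have hzp : ∀ z', IsZeroPoint Q z' → z' = z := by
    intro z' hz'
    by_contra hne
    obtain ⟨v, hvQ, hvz', hB⟩ := hzbp.2 z' hz'.1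
    exact hz'.2 ⟨z, ⟨hz.1, by simp [Ne.symm hne]⟩, v, ⟨hvQ, by simp [hvz']⟩, hB⟩
  obtain ⟨w₀, hw₀Q, hw₀z, -⟩ := hzbp.2 z hz.1
  have hDn : ‖w₀ - z‖ ≠ 0 := by simp [sub_eq_zero, hw₀z]
  set d : EuclideanSpace ℝ (Fin n) := ‖w₀ - z‖⁻¹ • (w₀ - z) with hdd
  have hd : ‖d‖ = 1 := by
    rw [hdd, norm_smul, norm_inv, norm_norm, inv_mul_cancel₀ hDn]
  have hw₀d : w₀ = z + ‖w₀ - z‖ • d := by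
    rw [hdd, smul_smul, mul_inv_cancel₀ hDn, one_smul]
    abel
  have hray : ∀ q ∈ Q, ∃ t : ℝ, 0 ≤ t ∧ q = z + t • d := by
    intro q hq
    by_cases hqz : q = z
    · exact ⟨0, le_refl 0, by simp [hqz]⟩
    have tot : Beta z q w₀ ∨ Beta z w₀ q := by
      rcases hL.2.2.1 z (hQL hz.1) q (hQL hq) w₀ (hQL hw₀Q) with h|h|h
      · exact Or.inl h
      · exact Or.inr h
      · exact absurd h
          (fun h => hz.2 ⟨q, ⟨hq, by simp [hqz]⟩, w₀, ⟨hw₀Q, by simp [hw₀z]⟩, h⟩)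
    rcases tot with h|h
    · have h' : Beta (z + (0:ℝ) • d) q (z + ‖w₀ - z‖ • d) := by
        rw [zero_smul, add_zero, ← hw₀d]; exact h
      obtain ⟨t, ht, rfl⟩ := segCoord h'
      refine ⟨t, ?_, rfl⟩
      rcases ht with ⟨h1, h2⟩|⟨h1, h2⟩
      · exact h1
      · linarith [norm_nonneg (w₀ - z)]
    · have hw : w₀ ∈ segment ℝ z q := by
        rw [mem_segment_iff_wbtw, ← dist_add_dist_eq_iff]
        exact h.symm
      rw [segment_eq_image'] at hw
      obtain ⟨θ, ⟨h0, h1⟩, hw⟩ := hw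
      have hw2 : z + θ • (q - z) = w₀ := hw
      have hθ : θ ≠ 0 := by
        rintro rfl
        rw [zero_smul, add_zero] at hw2
        exact hw₀z hw2.symm
      have hqz' : q - z = θ⁻¹ • (w₀ - z) := by
        have h2 : w₀ - z = θ • (q - z) := by rw [← hw2]; abel
        rw [h2, smul_smul, inv_mul_cancel₀ hθ, one_smul]
      refine ⟨θ⁻¹ * ‖w₀ - z‖, mul_nonneg (inv_nonneg.2 h0) (norm_nonneg _), ?_⟩
      have h3 : (θ⁻¹ * ‖w₀ - z‖) • d = θ⁻¹ • (w₀ - z) := by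
        rw [hdd, smul_smul, mul_assoc, mul_inv_cancel₀ hDn, mul_one]
      rw [h3, ← hqz']
      abel
  have hdz : ∀ t : ℝ, 0 ≤ t → dist z (z + t • d) = t := by
    intro t ht
    have h := distCoord hd 0 t (z := z)
    rw [zero_smul, add_zero] at h
    rw [h, abs_of_nonpos (by linarith), neg_sub, sub_zero]
  have hsucc : ∀ u, u ∈ Q → ∃ v, v ∈ Q ∧ SuccRel T Q u v ∧ dist z u < dist z v := by
    intro u hu
    obtain ⟨a, ha0, hua⟩ := hray u hu
    obtain ⟨w, hwQ, hwu, hzuw⟩ := hzbp.2 u hu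
    obtain ⟨b, hb0, hwb⟩ := hray w hwQ
    have hne : a ≠ b := fun h => hwu (by rw [hwb, hua, h])
    have hab : a < b := by
      have h0 : Beta (z + (0:ℝ) • d) (z + a • d) (z + b • d) := by
        rw [zero_smul, add_zero, ← hua, ← hwb]; exact hzuw
      rw [betaCoord hd] at h0
      rcases h0 with ⟨h1, h2⟩|⟨h1, h2⟩
      · exact lt_of_le_of_ne h2 hne
      · exact absurd (by linarith : a = b) hne
    obtain ⟨p, hpT, hpu, hupw, hgap⟩ := hds u hu w hwQ (fun h => hwu h.symm)
    obtain ⟨c, hc, hpc⟩ := segCoord (show Beta (z + a • d) p (z + b • d) by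
      rw [← hua, ← hwb]; exact hupw)
    have hcb : a ≤ c ∧ c ≤ b := by
      rcases hc with h|⟨h1, h2⟩
      · exact h
      · exact ⟨by linarith, by linarith⟩
    have hac : a < c :=
      lt_of_le_of_ne hcb.1 (fun h => hpu (by rw [hpc, hua, ← h]))
    have hc0 : 0 ≤ c := le_trans ha0 hcb.1
    by_cases hpQ : p ∈ Q
    · refine ⟨p, hpQ, ⟨hu, hpQ, ⟨Ne.symm hpu, hgap⟩, z, hz, ?_⟩, ?_⟩
      · have h0 : Beta (z + (0:ℝ) • d) (z + a • d) (z + c • d) :=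
          (betaCoord hd 0 a c).2 (Or.inl ⟨ha0, le_of_lt hac⟩)
        rw [zero_smul, add_zero] at h0
        rw [hua, hpc]; exact h0
      · rw [hua, hpc, hdz a ha0, hdz c hc0]; exact hac
    · have hpw : p ≠ w := fun h => hpQ (h ▸ hwQ)
      obtain ⟨s', hs'm, u'', hu''m, hB', hgap'⟩ :=
        hadj p hpT ⟨u, ⟨hu, by simp [Ne.symm hpu]⟩, w, ⟨hwQ, by simp [Ne.symm hpw]⟩, hupw⟩
      obtain ⟨hs'Q, hs'p⟩ := hs'm
      obtain ⟨hu''Q, hu''p⟩ := hu''m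
      have hs'p' : s' ≠ p := by simpa using hs'p
      have hu''p' : u'' ≠ p := by simpa using hu''p
      obtain ⟨e, he0, hs'e⟩ := hray s' hs'Q
      obtain ⟨g, hg0, hu''g⟩ := hray u'' hu''Q
      obtain ⟨c', hc', hpc'⟩ := segCoord (show Beta (z + e • d) p (z + g • d) by
        rw [← hs'e, ← hu''g]; exact hB')
      have hcc : c' = c := coordInj hd (by rw [← hpc', ← hpc])
      rw [hcc] at hc'
      have hce : c ≠ e := fun h => hs'p' (by rw [hs'e, hpc, ← h])
      have hcg : c ≠ g := fun h => hu''p' (by rw [hu''g, hpc, ← h])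
      have key : ∀ (s₁ u₁ : EuclideanSpace ℝ (Fin n)) (e₁ g₁ : ℝ),
          s₁ ∈ Q → u₁ ∈ Q → s₁ = z + e₁ • d → u₁ = z + g₁ • d → e₁ < c → c < g₁ →
          (∀ v ∈ T, v ≠ p → BetaS s₁ v u₁ → v ∉ Q) →
          ∃ v, v ∈ Q ∧ SuccRel T Q u v ∧ dist z u < dist z v := by
        intro s₁ u₁ e₁ g₁ hs₁Q hu₁Q hs₁ hu₁ hec hcg₁ hgapA
        have hag : a < g₁ := lt_trans hac hcg₁
        have hg₁0 : 0 ≤ g₁ := le_trans ha0 (le_of_lt hag)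
        refine ⟨u₁, hu₁Q, ⟨hu, hu₁Q, ⟨?_, ?_⟩, z, hz, ?_⟩, ?_⟩
        · intro h
          exact absurd (coordInj hd (by rw [← hua, ← hu₁, h])) (ne_of_lt hag)
        · intro r hrT hrS hrQ
          obtain ⟨t, ht0, hrt⟩ := hray r hrQ
          obtain ⟨hB, hru, hru₁⟩ := hrS
          have hB2 : Beta (z + a • d) (z + t • d) (z + g₁ • d) := by
            rw [← hua, ← hrt, ← hu₁]; exact hB
          rw [betaCoord hd] at hB2
          have hta : a < t := by
            rcases hB2 with ⟨h1, h2⟩|⟨h1, h2⟩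
            · exact lt_of_le_of_ne h1 (fun h => hru (by rw [hua, hrt, h]))
            · linarith
          have htg : t < g₁ := by
            rcases hB2 with ⟨h1, h2⟩|⟨h1, h2⟩
            · exact lt_of_le_of_ne h2 (fun h => hru₁ (by rw [hrt, hu₁, h]))
            · linarith
          rcases lt_trichotomy t c with h|h|h
          · refine absurd hrQ (hgap r hrT ⟨?_, ?_, ?_⟩)
            · rw [hua, hrt, hpc]
              exact (betaCoord hd a t c).2 (Or.inl ⟨le_of_lt hta, le_of_lt h⟩)
            · exact fun h' => (ne_of_lt hta) (coordInj hd (by rw [← hua, ← hrt, h']))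
            · exact fun h' => (ne_of_lt h) (coordInj hd (by rw [← hrt, ← hpc, h']))
          · exact hpQ (by rw [hpc, ← h, ← hrt]; exact hrQ)
          · refine absurd hrQ (hgapA r hrT ?_ ⟨?_, ?_, ?_⟩)
            · exact fun h' => (ne_of_gt h) (coordInj hd (by rw [← hrt, ← hpc, h']))
            · rw [hs₁, hrt, hu₁]
              exact (betaCoord hd e₁ t g₁).2 (Or.inl ⟨by linarith, le_of_lt htg⟩)
            · exact fun h' => (ne_of_lt (lt_trans hec h)) (coordInj hd (by rw [← hs₁, ← hrt, h']))
            · exact fun h' => (ne_of_lt htg) (coordInj hd (by rw [← hrt, ← hu₁, h']))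
        · have h0 : Beta (z + (0:ℝ) • d) (z + a • d) (z + g₁ • d) :=
            (betaCoord hd 0 a g₁).2 (Or.inl ⟨ha0, le_of_lt hag⟩)
          rw [zero_smul, add_zero] at h0
          rw [hua, hu₁]; exact h0
        · rw [hua, hu₁, hdz a ha0, hdz g₁ hg₁0]; exact hag
      rcases hc' with ⟨h1, h2⟩|⟨h1, h2⟩
      · exact key s' u'' e g hs'Q hu''Q hs'e hu''g
          (lt_of_le_of_ne h1 (Ne.symm hce)) (lt_of_le_of_ne h2 hcg) hgap'
      · refine key u'' s' g e hu''Q hs'Q hu''g hs'e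
          (lt_of_le_of_ne h1 (Ne.symm hcg)) (lt_of_le_of_ne h2 hce) ?_
        rintro v hv hvp ⟨hB, hb1, hb2⟩
        exact hgap' v hv hvp ⟨betaSymm hB, Ne.symm hb2, Ne.symm hb1⟩
  refine ⟨hzp, hzbp, hbp, ?_⟩
  choose gnext hg1 hg2 hg3 using hsucc
  let F : ℕ → {x : EuclideanSpace ℝ (Fin n) // x ∈ Q} :=
    fun i => Nat.rec ⟨z, hz.1⟩ (fun _ x => ⟨gnext x.1 x.2, hg1 x.1 x.2⟩) i
  have hFs : ∀ i, (F (i + 1)).1 = gnext (F i).1 (F i).2 := fun i => rfl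
  have hmono : StrictMono fun i => dist z (F i).1 :=
    strictMono_nat_of_lt_succ (fun i => hg3 (F i).1 (F i).2)
  refine ⟨fun i => (F i).1, rfl, fun i j hij => hmono.injective (congrArg (dist z) hij),
    fun i => (F i).2, fun i => hg2 (F i).1 (F i).2⟩
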